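/- arXiv:2308.13985 — 6 statements merged into one kernel-verified Lean document; each statement's English description precedes it below -/
import Mathlib

section
/- Let A be an entrywise nonnegative real symmetric n×n matrix. If v is an eigenvector of A with all entries strictly positive and eigenvalue λ, then λ equals the largest eigenvalue of A. -/
/-- If a nonnegative real symmetric matrix has an entrywise strictly positive
eigenvector with eigenvalue `λ`, then `λ` is the largest eigenvalue. -/
theorem stmt_3 {n : ℕ} (A : Matrix (Fin n) (Fin n) ℝ)
    (hnonneg : ∀ i j, 0 ≤ A i j) (hsymm : A.IsSymm)
    (v : Fin n → ℝ) (hv : ∀ i, 0 < v i) (lam : ℝ)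
    (heig : A.mulVec v = lam • v) :
    ∀ μ ∈ spectrum ℝ A, μ ≤ lam := by
  intro μ hμ
  rw [← AlgEquiv.spectrum_eq Matrix.toLinAlgEquiv'] at hμ
  have hev : Module.End.HasEigenvalue (Matrix.toLinAlgEquiv' A) μ :=
    Module.End.HasEigenvalue.of_mem_spectrum hμ
  obtain ⟨w, hw⟩ := hev.exists_hasEigenvector
  have hmw : A.mulVec w = μ • w := by
    have := hw.apply_eq_smul
    rwa [Matrix.toLinAlgEquiv'_apply] at this
  set u : Fin n → ℝ := fun i => |w i| with hu
  -- pointwise inequality |μ| * u i ≤ (A.mulVec u) i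
  have hpt : ∀ i, |μ| * u i ≤ A.mulVec u i := by
    intro i
    have h1 : |μ| * u i = |(A.mulVec w) i| := by
      rw [hmw]; simp [hu, abs_mul]
    rw [h1, Matrix.mulVec, dotProduct]
    refine (Finset.abs_sum_le_sum_abs _ _).trans ?_
    apply Finset.sum_le_sum
    intro j _
    rw [abs_mul, abs_of_nonneg (hnonneg i j)]
  -- sum against v
  have hS : ∑ i, v i * (|μ| * u i) ≤ ∑ i, v i * A.mulVec u i :=
    Finset.sum_le_sum fun i _ => mul_le_mul_of_nonneg_left (hpt i) (hv i).le
  have hswap : ∑ i, v i * A.mulVec u i = ∑ j, lam * (v j * u j) := by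
    simp_rw [Matrix.mulVec, dotProduct, Finset.mul_sum]
    rw [Finset.sum_comm]
    refine Finset.sum_congr rfl fun j _ => ?_
    have : ∑ i, v i * (A i j * u j) = (∑ i, A j i * v i) * u j := by
      rw [Finset.sum_mul]
      refine Finset.sum_congr rfl fun i _ => ?_
      have : A j i = A i j := by
        conv_lhs => rw [← hsymm]
        rfl
      rw [this]; ring
    rw [this]
    have hAv : ∑ i, A j i * v i = lam * v j := by
      have := congrFun heig j
      simpa [Matrix.mulVec, dotProduct] using this
    rw [hAv]; ring
  have hSum : |μ| * (∑ i, v i * u i) ≤ lam * (∑ i, v i * u i) := by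
    calc |μ| * (∑ i, v i * u i) = ∑ i, v i * (|μ| * u i) := by
          rw [Finset.mul_sum]; exact Finset.sum_congr rfl fun i _ => by ring
      _ ≤ ∑ i, v i * A.mulVec u i := hS
      _ = ∑ j, lam * (v j * u j) := hswap
      _ = lam * (∑ i, v i * u i) := by rw [Finset.mul_sum]
  have hpos : 0 < ∑ i, v i * u i := by
    obtain ⟨i, hi⟩ := Function.ne_iff.mp hw.right
    have : (0:ℝ) < v i * u i := mul_pos (hv i) (abs_pos.mpr hi)
    refine Finset.sum_pos' (fun j _ => mul_nonneg (hv j).le (abs_nonneg _)) ⟨i, Finset.mem_univ i, this⟩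
  have := le_of_mul_le_mul_right hSum hpos
  calc μ ≤ |μ| := le_abs_self μ
    _ ≤ lam := this
end

section
/- Let G be a k×k symmetric positive definite matrix with nonnegative entries, and let t ∈ R^k be a vector with w := G^{-1} t entrywise strictly positive. Then the matrix T = G^{-1} − diag(w ⊘ (G w)) is positive semidefinite, where ⊘ denotes entrywise division. -/
/-!
With `w = G⁻¹ t > 0` and `D = diag (G w ⊘ w)`, the nonnegative weighted sum
`∑ i j, G i j * w i * w j * (y i / w i - y j / w j) ^ 2` equals `2 yᵀ (D - G) y`, so `G ≤ D` in
the Loewner order (the paper's Perron–Frobenius bound `ρ(RGR) ≤ 1` with `R² = D⁻¹`).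
Inversion is antitone on positive definite matrices, hence `D⁻¹ ≤ G⁻¹`.
-/

open Matrix

namespace Matrix

variable {n : Type*} [Fintype n] [DecidableEq n]

lemma inv_diagonal_of_ne_zero {K : Type*} [Field K] {d : n → K} (hd : ∀ i, d i ≠ 0) :
    (diagonal d)⁻¹ = diagonal d⁻¹ := by
  refine inv_eq_left_inv ?_
  rw [diagonal_mul_diagonal, ← diagonal_one]
  exact congrArg diagonal (funext fun i ↦ inv_mul_cancel₀ (hd i))

lemma IsSymm.sum_sum_mul_sq_div_sub_div {A : Matrix n n ℝ} (hA : A.IsSymm) {w : n → ℝ}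
    (hw : ∀ i, w i ≠ 0) (y : n → ℝ) :
    ∑ i, ∑ j, A i j * w i * w j * (y i / w i - y j / w j) ^ 2
      = 2 * (y ⬝ᵥ (diagonal (fun i ↦ (A *ᵥ w) i / w i) - A) *ᵥ y) := by
  have hterm : ∀ i j, A i j * w i * w j * (y i / w i - y j / w j) ^ 2
      = A i j * w j / w i * y i ^ 2 + A j i * w i / w j * y j ^ 2 - 2 * (y i * (A i j * y j)) := by
    intro i j
    rw [hA.apply i j]
    field_simp [hw i, hw j]
    ring
  have hdiag : ∑ i, ∑ j, A i j * w j / w i * y i ^ 2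
      = y ⬝ᵥ diagonal (fun i ↦ (A *ᵥ w) i / w i) *ᵥ y := by
    simp only [dotProduct, mulVec_diagonal]
    refine Finset.sum_congr rfl fun i _ ↦ ?_
    rw [mulVec, dotProduct, Finset.sum_div, Finset.sum_mul, Finset.mul_sum]
    refine Finset.sum_congr rfl fun j _ ↦ ?_
    ring
  simp only [hterm, Finset.sum_add_distrib, Finset.sum_sub_distrib, ← Finset.mul_sum]
  rw [Finset.sum_comm (f := fun i j ↦ A j i * w i / w j * y j ^ 2), hdiag, sub_mulVec,
    dotProduct_sub]
  simp only [dotProduct, mulVec]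
  ring

lemma IsSymm.posSemidef_diagonal_mulVec_div_sub {A : Matrix n n ℝ} (hA : A.IsSymm)
    (hA0 : ∀ i j, 0 ≤ A i j) {w : n → ℝ} (hw : ∀ i, 0 < w i) :
    (diagonal (fun i ↦ (A *ᵥ w) i / w i) - A).PosSemidef := by
  refine .of_dotProduct_mulVec_nonneg
    ((isHermitian_diagonal _).sub (isHermitian_iff_isSymm.mpr hA)) fun y ↦ ?_
  have hsum : 0 ≤ ∑ i, ∑ j, A i j * w i * w j * (y i / w i - y j / w j) ^ 2 := by
    refine Finset.sum_nonneg fun i _ ↦ Finset.sum_nonneg fun j _ ↦ ?_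
    have := hw i; have := hw j; have := hA0 i j
    positivity
  rw [hA.sum_sum_mul_sq_div_sub_div (fun i ↦ (hw i).ne') y] at hsum
  rw [star_trivial]
  linarith

lemma PosDef.two_mul_dotProduct_sub_le {A : Matrix n n ℝ} (hA : A.PosDef) (x y : n → ℝ) :
    2 * (x ⬝ᵥ y) - y ⬝ᵥ A *ᵥ y ≤ x ⬝ᵥ A⁻¹ *ᵥ x := by
  -- expand `0 ≤ (x - A y)ᵀ A⁻¹ (x - A y)`
  have hA' : A.IsSymm := isHermitian_iff_isSymm.mp hA.isHermitian
  have hunit : IsUnit A.det := (isUnit_iff_isUnit_det A).mp hA.isUnit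
  have hAy : A *ᵥ y = y ᵥ* A := by rw [← mulVec_transpose, hA'.eq]
  have hinv_cancel : A⁻¹ *ᵥ (A *ᵥ y) = y := by
    rw [mulVec_mulVec, nonsing_inv_mul A hunit, one_mulVec]
  have hcross : (A *ᵥ y) ⬝ᵥ A⁻¹ *ᵥ x = x ⬝ᵥ y := by
    rw [dotProduct_mulVec, hAy, vecMul_vecMul, mul_nonsing_inv A hunit, vecMul_one,
      dotProduct_comm]
  have hsq := hA.inv.posSemidef.dotProduct_mulVec_nonneg (x - A *ᵥ y)
  rw [star_trivial, mulVec_sub, hinv_cancel, sub_dotProduct, dotProduct_sub, dotProduct_sub,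
    hcross, dotProduct_comm (A *ᵥ y) y] at hsq
  linarith

lemma PosDef.posSemidef_inv_sub_inv {A B : Matrix n n ℝ} (hA : A.PosDef)
    (hAB : (B - A).PosSemidef) : (A⁻¹ - B⁻¹).PosSemidef := by
  have hB : B.PosDef := by simpa using hA.add_posSemidef hAB
  have hunit : IsUnit B.det := (isUnit_iff_isUnit_det B).mp hB.isUnit
  refine .of_dotProduct_mulVec_nonneg (hA.inv.isHermitian.sub hB.inv.isHermitian) fun x ↦ ?_
  set y := B⁻¹ *ᵥ x
  have hquad : y ⬝ᵥ B *ᵥ y = x ⬝ᵥ B⁻¹ *ᵥ x := by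
    rw [mulVec_mulVec, mul_nonsing_inv B hunit, one_mulVec, dotProduct_comm]
  have hle : y ⬝ᵥ A *ᵥ y ≤ y ⬝ᵥ B *ᵥ y := by
    have := hAB.dotProduct_mulVec_nonneg y
    rw [star_trivial, sub_mulVec, dotProduct_sub] at this
    linarith
  have := hA.two_mul_dotProduct_sub_le x y
  rw [star_trivial, sub_mulVec, dotProduct_sub]
  linarith

end Matrix

theorem stmt_4_general {k : ℕ} (G : Matrix (Fin k) (Fin k) ℝ)
    (hpd : G.PosDef) (hnonneg : ∀ i j, 0 ≤ G i j)
    (t : Fin k → ℝ) (hw : ∀ i, 0 < (G⁻¹.mulVec t) i) :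
    (G⁻¹ - Matrix.diagonal (fun i =>
      (G⁻¹.mulVec t) i / (G.mulVec (G⁻¹.mulVec t)) i)).PosSemidef := by
  set w := G⁻¹ *ᵥ t
  have hD := (isHermitian_iff_isSymm.mp hpd.isHermitian).posSemidef_diagonal_mulVec_div_sub
    hnonneg hw
  have hD_pos : ∀ i, 0 < (G *ᵥ w) i / w i :=
    posDef_diagonal_iff.mp (by simpa using hpd.add_posSemidef hD)
  have hD_inv := inv_diagonal_of_ne_zero fun i ↦ (hD_pos i).ne'
  simpa only [hD_inv, Pi.inv_def, inv_div] using hpd.posSemidef_inv_sub_inv hD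

/-- If `G` is symmetric positive definite with nonnegative entries and
`w = G⁻¹ t` is entrywise positive, then `T = G⁻¹ - diag(w ⊘ (G w))` is
positive semidefinite. -/
theorem stmt_4 {k : ℕ} (G : Matrix (Fin k) (Fin k) ℝ)
    (hsymm : G.IsSymm) (hpd : G.PosDef) (hnonneg : ∀ i j, 0 ≤ G i j)
    (t : Fin k → ℝ) (hw : ∀ i, 0 < (G⁻¹.mulVec t) i) :
    (G⁻¹ - Matrix.diagonal (fun i =>
      (G⁻¹.mulVec t) i / (G.mulVec (G⁻¹.mulVec t)) i)).PosSemidef :=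
  stmt_4_general G hpd hnonneg t hw
end

section
/- Let Ŷ be an n×k real matrix with linearly independent columns and Q = (Ŷ^T Ŷ)^{-1}. Define, for each sign pattern D (a diagonal matrix with ±1 diagonal entries), E_D = { v ∈ R^k : v ≥ 0 entrywise, (√v)^T (D Q D) (√v) = 1 }, where √v is the entrywise square root. Then the set F₁ = { ((⟨ŷ_1,s⟩)^2, …, (⟨ŷ_k,s⟩)^2) : s ∈ span(ŷ_1,…,ŷ_k), ‖s‖=1 } equals the union of E_D over all sign patterns D. -/
/-!
Write `s = ∑ cᵢ ŷᵢ` and let `G` be the Gram matrix. The vector `w = (⟨ŷᵢ, s⟩)ᵢ` is `G c`, and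
`‖s‖² = cᵀ G c = wᵀ G⁻¹ w`, so these vectors for unit `s` in the span fill the ellipsoid
`wᵀ Q w = 1`. Squaring the coordinates forgets only their signs: `v` is the coordinatewise square
of `w` iff `w = D √v` for a sign pattern `D`, and `(D √v)ᵀ Q (D √v) = √vᵀ (D Q D) √v`.
-/

open Matrix

section GramEllipsoid

variable {ι E : Type*} [Fintype ι] [NormedAddCommGroup E] [InnerProductSpace ℝ E]

theorem inner_sum_smul_eq_gram_mulVec (v : ι → E) (c : ι → ℝ) (i : ι) :
    inner ℝ (v i) (∑ j, c j • v j) = (gram ℝ v *ᵥ c) i := by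
  simp only [inner_sum, real_inner_smul_right, mulVec, dotProduct, gram_apply, mul_comm]

theorem norm_sum_smul_sq_eq_dotProduct_gram_mulVec (v : ι → E) (c : ι → ℝ) :
    ‖∑ i, c i • v i‖ ^ 2 = c ⬝ᵥ gram ℝ v *ᵥ c := by
  rw [← real_inner_self_eq_norm_sq, ← star_dotProduct_gram_mulVec, star_trivial]

variable [DecidableEq ι]

theorem image_inner_unit_span_eq_ellipsoid {v : ι → E} (hv : LinearIndependent ℝ v) :
    (fun s i => inner ℝ (v i) s) '' {s | s ∈ Submodule.span ℝ (Set.range v) ∧ ‖s‖ = 1} =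
      {w | w ⬝ᵥ (gram ℝ v)⁻¹ *ᵥ w = 1} := by
  have hdet : IsUnit (gram ℝ v).det := (posDef_gram_of_linearIndependent hv).det_pos.ne'.isUnit
  ext w
  simp only [Set.mem_image, Set.mem_ofPred_eq, Submodule.mem_span_range_iff_exists_fun]
  constructor
  · rintro ⟨_, ⟨⟨c, rfl⟩, hs⟩, rfl⟩
    simp only [funext (inner_sum_smul_eq_gram_mulVec v c), mulVec_mulVec,
      nonsing_inv_mul _ hdet, one_mulVec]
    rw [dotProduct_comm, ← norm_sum_smul_sq_eq_dotProduct_gram_mulVec, hs, one_pow]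
  · intro hw
    set c := (gram ℝ v)⁻¹ *ᵥ w
    have hGc : gram ℝ v *ᵥ c = w := by
      rw [mulVec_mulVec, mul_nonsing_inv _ hdet, one_mulVec]
    refine ⟨∑ i, c i • v i, ⟨⟨c, rfl⟩, ?_⟩, ?_⟩
    · rw [← pow_left_inj₀ (norm_nonneg _) zero_le_one two_ne_zero, one_pow,
        norm_sum_smul_sq_eq_dotProduct_gram_mulVec, hGc, dotProduct_comm, hw]
    · exact funext fun i => (inner_sum_smul_eq_gram_mulVec v c i).trans (by rw [hGc])

end GramEllipsoid

theorem dotProduct_diagonal_mul_mul_diagonal_mulVec {ι R : Type*} [Fintype ι] [DecidableEq ι]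
    [CommSemiring R] (A : Matrix ι ι R) (ε u : ι → R) :
    u ⬝ᵥ (diagonal ε * A * diagonal ε) *ᵥ u = (ε * u) ⬝ᵥ A *ᵥ (ε * u) := by
  have hεu : diagonal ε *ᵥ u = ε * u := funext (mulVec_diagonal ε u)
  have huε : u ᵥ* diagonal ε = ε * u :=
    funext fun i => (vecMul_diagonal u ε i).trans (mul_comm _ _)
  rw [← mulVec_mulVec, ← mulVec_mulVec, dotProduct_mulVec, huε, hεu]

theorem setOf_sq_mem_eq_sign_mul_sqrt_mem {ι : Type*} (S : Set (ι → ℝ)) :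
    {v : ι → ℝ | ∃ w ∈ S, ∀ i, v i = w i ^ 2} =
      {v : ι → ℝ | ∃ ε : ι → ℝ, (∀ i, ε i = 1 ∨ ε i = -1) ∧ (∀ i, 0 ≤ v i) ∧
        (ε * fun i => √(v i)) ∈ S} := by
  ext v
  constructor
  · rintro ⟨w, hw, hvw⟩
    obtain rfl : v = fun i => w i ^ 2 := funext hvw
    refine ⟨fun i => if 0 ≤ w i then 1 else -1, fun i => by dsimp only; split_ifs <;> simp,
      fun i => sq_nonneg _, ?_⟩
    convert hw using 1
    funext i
    rw [Pi.mul_apply, Real.sqrt_sq_eq_abs]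
    split_ifs with h
    · rw [one_mul, abs_of_nonneg h]
    · rw [abs_of_neg (not_le.mp h), neg_one_mul, neg_neg]
  · rintro ⟨ε, hε, hv, hS⟩
    refine ⟨_, hS, fun i => ?_⟩
    rcases hε i with h | h <;> simp [h, Real.sq_sqrt (hv i)]

/-- Multi-surface structure of the feasible region for width `q = 1`: the set of vectors
of squared inner products `(⟨ŷ_i, s⟩²)_i` over unit `s ∈ span(ŷ_i)` equals the union,
over all sign patterns `ε ∈ {±1}^k`, of the surfaces
`E_ε = { v ≥ 0 : (√v)ᵀ (D_ε Q D_ε) (√v) = 1 }` with `Q = (ŶᵀŶ)⁻¹`. -/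
theorem stmt_7 {n k : ℕ} (yhat : Fin k → EuclideanSpace ℝ (Fin n))
    (hli : LinearIndependent ℝ yhat)
    (Q : Matrix (Fin k) (Fin k) ℝ)
    (hQ : Q = (Matrix.of fun i j => (inner ℝ (yhat i) (yhat j) : ℝ))⁻¹) :
    {v : Fin k → ℝ | ∃ s : EuclideanSpace ℝ (Fin n),
        s ∈ Submodule.span ℝ (Set.range yhat) ∧ ‖s‖ = 1 ∧
        ∀ i, v i = (inner ℝ (yhat i) s : ℝ) ^ 2} =
      {v : Fin k → ℝ | ∃ ε : Fin k → ℝ, (∀ i, ε i = 1 ∨ ε i = -1) ∧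
        (∀ i, 0 ≤ v i) ∧
        (fun i => Real.sqrt (v i)) ⬝ᵥ
          (Matrix.diagonal ε * Q * Matrix.diagonal ε).mulVec
            (fun i => Real.sqrt (v i)) = 1} := by
  have hQ' : Q = (gram ℝ yhat)⁻¹ := hQ
  calc _ = {v : Fin k → ℝ | ∃ w ∈ (fun s i => inner ℝ (yhat i) s) ''
          {s | s ∈ Submodule.span ℝ (Set.range yhat) ∧ ‖s‖ = 1}, ∀ i, v i = w i ^ 2} := by
        ext v
        simp only [Set.mem_ofPred_eq, Set.exists_mem_image, and_assoc]
    _ = {v : Fin k → ℝ | ∃ w ∈ {w | w ⬝ᵥ Q *ᵥ w = 1}, ∀ i, v i = w i ^ 2} := by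
        rw [image_inner_unit_span_eq_ellipsoid hli, hQ']
    _ = _ := by
        rw [setOf_sq_mem_eq_sign_mul_sqrt_mem]
        simp only [Set.mem_ofPred_eq, dotProduct_diagonal_mul_mul_diagonal_mulVec]
end

section
/- Let A ⊆ R^n be a closed convex cone and A* its dual cone, and suppose A ⊆ A*. For any unit vector s, the reflection s' = 2·P_{A*}(s) − s is a unit vector satisfying ⟨s', x⟩ ≥ |⟨s, x⟩| for all x ∈ A. -/
/-!
Write `s = p + (s - p)` with `p` the projection of `s` onto the dual cone `A*`. Since `A*` is a
cone, the projection is orthogonal, `⟪s - p, p⟫ = 0`, and `s - p` lies in the polar of `A*`.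
Orthogonality makes the reflection `2p - s = p - (s - p)` as long as `s`. For `x ∈ A ⊆ A*` the
polar condition gives `⟪s, x⟫ ≤ ⟪p, x⟫`, and `0 ≤ ⟪p, x⟫` since `p ∈ A*`; together these say
`|⟪s, x⟫| ≤ 2⟪p, x⟫ - ⟪s, x⟫`.
-/

open scoped RealInnerProductSpace

variable {E : Type*} [NormedAddCommGroup E] [InnerProductSpace ℝ E]

theorem real_inner_sub_sub_nonpos_of_forall_dist_le {K : Set E} (hK : Convex ℝ K) {s p : E}
    (hp : p ∈ K) (hmin : ∀ y ∈ K, dist s p ≤ dist s y) : ∀ w ∈ K, ⟪s - p, w - p⟫ ≤ 0 := by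
  have : Nonempty K := ⟨⟨p, hp⟩⟩
  refine (norm_eq_iInf_iff_real_inner_le_zero hK hp).mp (le_antisymm ?_ ?_)
  · exact le_ciInf fun w => by simpa only [dist_eq_norm] using hmin w w.2
  · exact ciInf_le ⟨0, Set.forall_mem_range.2 fun w : K => norm_nonneg (s - w)⟩ ⟨p, hp⟩

namespace PointedCone

variable {K : PointedCone ℝ E} {s p : E}

theorem real_inner_sub_self_eq_zero_of_forall_dist_le (hp : p ∈ K)
    (hmin : ∀ y ∈ K, dist s p ≤ dist s y) : ⟪s - p, p⟫ = 0 := by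
  have hvar := real_inner_sub_sub_nonpos_of_forall_dist_le K.convex hp hmin
  have h₂ := hvar _ (K.smul_mem zero_le_two hp)
  have h₀ := hvar 0 K.zero_mem
  rw [two_smul, add_sub_cancel_right] at h₂
  rw [zero_sub, inner_neg_right] at h₀
  linarith

theorem real_inner_sub_nonpos_of_forall_dist_le (hp : p ∈ K)
    (hmin : ∀ y ∈ K, dist s p ≤ dist s y) {w : E} (hw : w ∈ K) : ⟪s - p, w⟫ ≤ 0 := by
  have h := real_inner_sub_sub_nonpos_of_forall_dist_le K.convex hp hmin w hw
  rwa [inner_sub_right, real_inner_sub_self_eq_zero_of_forall_dist_le hp hmin, sub_zero] at h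

end PointedCone

theorem norm_two_smul_sub_eq_norm_of_real_inner_eq_zero {s p : E} (h : ⟪s - p, p⟫ = 0) :
    ‖(2 : ℝ) • p - s‖ = ‖s‖ := by
  have hrefl := norm_sub_eq_norm_add h
  rwa [add_sub_cancel, sub_sub_eq_add_sub, ← two_smul ℝ] at hrefl

theorem stmt_10_general {n : ℕ} (A : Set (EuclideanSpace ℝ (Fin n)))
    (hdual : A ⊆ {y | ∀ x ∈ A, 0 ≤ (inner ℝ y x : ℝ)})
    (s p : EuclideanSpace ℝ (Fin n)) (hnorm : ‖s‖ = 1)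
    (hp : p ∈ {y | ∀ x ∈ A, 0 ≤ (inner ℝ y x : ℝ)})
    (hmin : ∀ y ∈ {y : EuclideanSpace ℝ (Fin n) | ∀ x ∈ A, 0 ≤ (inner ℝ y x : ℝ)},
      dist s p ≤ dist s y) :
    ‖(2 : ℝ) • p - s‖ = 1 ∧
      ∀ x ∈ A, |(inner ℝ s x : ℝ)| ≤ (inner ℝ ((2 : ℝ) • p - s) x : ℝ) := by
  have hK : {y | ∀ x ∈ A, 0 ≤ ⟪y, x⟫} = (PointedCone.dual (innerₗ _) A : Set _) := by
    ext y
    simp [real_inner_comm]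
  rw [hK] at hdual hp hmin
  refine ⟨?_, fun x hx => ?_⟩
  · rw [norm_two_smul_sub_eq_norm_of_real_inner_eq_zero
      (PointedCone.real_inner_sub_self_eq_zero_of_forall_dist_le hp hmin), hnorm]
  · have hsx := PointedCone.real_inner_sub_nonpos_of_forall_dist_le hp hmin (hdual hx)
    have hpx : 0 ≤ ⟪p, x⟫ := real_inner_comm x p ▸ hp hx
    rw [inner_sub_left] at hsx
    rw [inner_sub_left, real_inner_smul_left, abs_le]
    constructor <;> linarith

/-- If `A` is a closed convex cone contained in its dual cone `A*`, and `p` is the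
orthogonal projection of a unit vector `s` onto `A*`, then the reflection
`s' = 2 • p - s` is a unit vector with `⟨s', x⟩ ≥ |⟨s, x⟩|` for all `x ∈ A`. -/
theorem stmt_10 {n : ℕ} (A : Set (EuclideanSpace ℝ (Fin n)))
    (hclosed : IsClosed A) (hconv : Convex ℝ A)
    (hcone : ∀ x ∈ A, ∀ c : ℝ, 0 ≤ c → c • x ∈ A)
    (hdual : A ⊆ {y | ∀ x ∈ A, 0 ≤ (inner ℝ y x : ℝ)})
    (s p : EuclideanSpace ℝ (Fin n)) (hnorm : ‖s‖ = 1)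
    (hp : p ∈ {y | ∀ x ∈ A, 0 ≤ (inner ℝ y x : ℝ)})
    (hmin : ∀ y ∈ {y : EuclideanSpace ℝ (Fin n) | ∀ x ∈ A, 0 ≤ (inner ℝ y x : ℝ)},
      dist s p ≤ dist s y) :
    ‖(2 : ℝ) • p - s‖ = 1 ∧
      ∀ x ∈ A, |(inner ℝ s x : ℝ)| ≤ (inner ℝ ((2 : ℝ) • p - s) x : ℝ) :=
  stmt_10_general A hdual s p hnorm hp hmin
end

section
/- Let Q be a 3×3 symmetric positive definite matrix of the form Q = [[q11, −q12, −q13], [−q12, q22, −q23], [−q13, −q23, q33]] with all q_{ij} > 0 for i ≠ j and q_{ii} > 0. Define g(a,b,c) = q11·a + q22·b + q33·c + 2 q12 √(ab) + 2 q13 √(ac) − 2 q23 √(bc), and let r = q11 q23² + q22 q13² + q33 q12² + 2 q12 q13 q23. Then for all 0 ≤ a ≤ q23²/r, 0 ≤ b ≤ q13²/r, 0 ≤ c ≤ q12²/r, we have g(a,b,c) ≤ 1, with equality if and only if (a,b,c) = (q23²/r, q13²/r, q12²/r). -/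
/-- On the box `[0, q₂₃²/r] × [0, q₁₃²/r] × [0, q₁₂²/r]`, the quadratic form
`g(a,b,c) = q₁₁ a + q₂₂ b + q₃₃ c + 2 q₁₂ √(ab) + 2 q₁₃ √(ac) − 2 q₂₃ √(bc)`
is at most `1`, with equality exactly at the corner `(q₂₃²/r, q₁₃²/r, q₁₂²/r)`,
where `r = q₁₁ q₂₃² + q₂₂ q₁₃² + q₃₃ q₁₂² + 2 q₁₂ q₁₃ q₂₃`. -/
theorem stmt_15 (q11 q22 q33 q12 q13 q23 r : ℝ)
    (h11 : 0 < q11) (h22 : 0 < q22) (h33 : 0 < q33)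
    (h12 : 0 < q12) (h13 : 0 < q13) (h23 : 0 < q23)
    (hQ : (!![q11, -q12, -q13; -q12, q22, -q23; -q13, -q23, q33]).PosDef)
    (hr : r = q11 * q23 ^ 2 + q22 * q13 ^ 2 + q33 * q12 ^ 2 + 2 * q12 * q13 * q23)
    (a b c : ℝ) (ha0 : 0 ≤ a) (hb0 : 0 ≤ b) (hc0 : 0 ≤ c)
    (ha : a ≤ q23 ^ 2 / r) (hb : b ≤ q13 ^ 2 / r) (hc : c ≤ q12 ^ 2 / r) :
    q11 * a + q22 * b + q33 * c + 2 * q12 * Real.sqrt (a * b)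
        + 2 * q13 * Real.sqrt (a * c) - 2 * q23 * Real.sqrt (b * c) ≤ 1 ∧
      (q11 * a + q22 * b + q33 * c + 2 * q12 * Real.sqrt (a * b)
          + 2 * q13 * Real.sqrt (a * c) - 2 * q23 * Real.sqrt (b * c) = 1 ↔
        a = q23 ^ 2 / r ∧ b = q13 ^ 2 / r ∧ c = q12 ^ 2 / r) := by
  clear hQ
  have hr0 : 0 < r := by rw [hr]; positivity
  set s : ℝ := Real.sqrt r with hsdef
  have hs0 : 0 < s := Real.sqrt_pos.mpr hr0
  have hs2 : s ^ 2 = r := Real.sq_sqrt hr0.le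
  -- rewrite the box corners
  have e23 : Real.sqrt (q23 ^ 2 / r) = q23 / s := by
    rw [show q23 ^ 2 / r = (q23 / s) ^ 2 by rw [div_pow, hs2]]
    exact Real.sqrt_sq (by positivity)
  have e13 : Real.sqrt (q13 ^ 2 / r) = q13 / s := by
    rw [show q13 ^ 2 / r = (q13 / s) ^ 2 by rw [div_pow, hs2]]
    exact Real.sqrt_sq (by positivity)
  have e12 : Real.sqrt (q12 ^ 2 / r) = q12 / s := by
    rw [show q12 ^ 2 / r = (q12 / s) ^ 2 by rw [div_pow, hs2]]
    exact Real.sqrt_sq (by positivity)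
  have hab : Real.sqrt (a * b) = Real.sqrt a * Real.sqrt b := Real.sqrt_mul ha0 b
  have hac : Real.sqrt (a * c) = Real.sqrt a * Real.sqrt c := Real.sqrt_mul ha0 c
  have hbc : Real.sqrt (b * c) = Real.sqrt b * Real.sqrt c := Real.sqrt_mul hb0 c
  set x : ℝ := Real.sqrt a with hxdef
  set y : ℝ := Real.sqrt b with hydef
  set z : ℝ := Real.sqrt c with hzdef
  have hx0 : 0 ≤ x := Real.sqrt_nonneg a
  have hy0 : 0 ≤ y := Real.sqrt_nonneg b
  have hz0 : 0 ≤ z := Real.sqrt_nonneg c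
  have hxa : x ^ 2 = a := Real.sq_sqrt ha0
  have hyb : y ^ 2 = b := Real.sq_sqrt hb0
  have hzc : z ^ 2 = c := Real.sq_sqrt hc0
  have hxX : x ≤ q23 / s := by rw [hxdef, ← e23]; exact Real.sqrt_le_sqrt ha
  have hyY : y ≤ q13 / s := by rw [hydef, ← e13]; exact Real.sqrt_le_sqrt hb
  have hzZ : z ≤ q12 / s := by rw [hzdef, ← e12]; exact Real.sqrt_le_sqrt hc
  have hX0 : 0 < q23 / s := by positivity
  have hY0 : 0 < q13 / s := by positivity
  have hZ0 : 0 < q12 / s := by positivity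
  -- value at the corner
  have hone : q11 * (q23 / s) ^ 2 + q22 * (q13 / s) ^ 2 + q33 * (q12 / s) ^ 2
      + 2 * q12 * ((q23 / s) * (q13 / s)) + 2 * q13 * ((q23 / s) * (q12 / s))
      - 2 * q23 * ((q13 / s) * (q12 / s)) = 1 := by
    rw [show q11 * (q23 / s) ^ 2 + q22 * (q13 / s) ^ 2 + q33 * (q12 / s) ^ 2
      + 2 * q12 * ((q23 / s) * (q13 / s)) + 2 * q13 * ((q23 / s) * (q12 / s))
      - 2 * q23 * ((q13 / s) * (q12 / s))
      = (q11 * q23 ^ 2 + q22 * q13 ^ 2 + q33 * q12 ^ 2 + 2 * q12 * q13 * q23) / s ^ 2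
      from by ring, hs2, ← hr, div_self hr0.ne']
  -- the three factors and their positivity/nonnegativity
  have hF1 : 0 < q11 * (q23 / s + x) + 2 * q12 * y + 2 * q13 * z := by
    have p1 : 0 < q11 * (q23 / s + x) := mul_pos h11 (by linarith only [hX0, hx0])
    have p2 : 0 ≤ 2 * q12 * y := mul_nonneg (by linarith only [h12]) hy0
    have p3 : 0 ≤ 2 * q13 * z := mul_nonneg (by linarith only [h13]) hz0
    linarith only [p1, p2, p3]
  have hF2 : 0 < q22 * (q13 / s + y) + 2 * q12 * (q23 / s) - 2 * q23 * z := by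
    have hrw : q22 * (q13 / s + y) + 2 * q12 * (q23 / s) - 2 * q23 * z
        = q22 * (q13 / s + y) + 2 * q23 * (q12 / s - z) := by ring
    rw [hrw]
    have p1 : 0 < q22 * (q13 / s + y) := mul_pos h22 (by linarith only [hY0, hy0])
    have p2 : 0 ≤ 2 * q23 * (q12 / s - z) :=
      mul_nonneg (by linarith only [h23]) (by linarith only [hzZ])
    linarith only [p1, p2]
  have hF3 : 0 < q33 * (q12 / s + z) + 2 * q13 * (q23 / s) - 2 * q23 * (q13 / s) := by
    have hrw : q33 * (q12 / s + z) + 2 * q13 * (q23 / s) - 2 * q23 * (q13 / s)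
        = q33 * (q12 / s + z) := by ring
    rw [hrw]
    exact mul_pos h33 (by linarith only [hZ0, hz0])
  have hD1 : 0 ≤ (q23 / s - x) * (q11 * (q23 / s + x) + 2 * q12 * y + 2 * q13 * z) :=
    mul_nonneg (by linarith only [hxX]) hF1.le
  have hD2 : 0 ≤ (q13 / s - y) * (q22 * (q13 / s + y) + 2 * q12 * (q23 / s) - 2 * q23 * z) :=
    mul_nonneg (by linarith only [hyY]) hF2.le
  have hD3 : 0 ≤ (q12 / s - z) * (q33 * (q12 / s + z) + 2 * q13 * (q23 / s) - 2 * q23 * (q13 / s)) :=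
    mul_nonneg (by linarith only [hzZ]) hF3.le
  rw [hab, hac, hbc, ← hxa, ← hyb, ← hzc]
  refine ⟨by linarith only [hD1, hD2, hD3, hone], ?_, ?_⟩
  · intro heq
    have hsum : (q23 / s - x) * (q11 * (q23 / s + x) + 2 * q12 * y + 2 * q13 * z)
        + (q13 / s - y) * (q22 * (q13 / s + y) + 2 * q12 * (q23 / s) - 2 * q23 * z)
        + (q12 / s - z) * (q33 * (q12 / s + z) + 2 * q13 * (q23 / s) - 2 * q23 * (q13 / s))
        = 0 := by linarith only [heq, hone]
    have hx : x = q23 / s := by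
      have h1 : (q23 / s - x) * (q11 * (q23 / s + x) + 2 * q12 * y + 2 * q13 * z) = 0 := by
        linarith only [hD1, hD2, hD3, hsum]
      rcases mul_eq_zero.1 h1 with h | h
      · linarith only [h]
      · exact absurd h hF1.ne'
    have hy : y = q13 / s := by
      have h1 : (q13 / s - y) * (q22 * (q13 / s + y) + 2 * q12 * (q23 / s) - 2 * q23 * z) = 0 := by
        linarith only [hD1, hD2, hD3, hsum]
      rcases mul_eq_zero.1 h1 with h | h
      · linarith only [h]
      · exact absurd h hF2.ne'
    have hz : z = q12 / s := by
      have h1 : (q12 / s - z) * (q33 * (q12 / s + z) + 2 * q13 * (q23 / s) - 2 * q23 * (q13 / s))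
          = 0 := by linarith only [hD1, hD2, hD3, hsum]
      rcases mul_eq_zero.1 h1 with h | h
      · linarith only [h]
      · exact absurd h hF3.ne'
    refine ⟨?_, ?_, ?_⟩
    · rw [hx, div_pow, hs2]
    · rw [hy, div_pow, hs2]
    · rw [hz, div_pow, hs2]
  · rintro ⟨ha', hb', hc'⟩
    have hx : x = q23 / s := by
      have h2 : x ^ 2 = (q23 / s) ^ 2 := by rw [ha', div_pow, hs2]
      rw [← Real.sqrt_sq hx0, h2, Real.sqrt_sq hX0.le]
    have hy : y = q13 / s := by
      have h2 : y ^ 2 = (q13 / s) ^ 2 := by rw [hb', div_pow, hs2]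
      rw [← Real.sqrt_sq hy0, h2, Real.sqrt_sq hY0.le]
    have hz : z = q12 / s := by
      have h2 : z ^ 2 = (q12 / s) ^ 2 := by rw [hc', div_pow, hs2]
      rw [← Real.sqrt_sq hz0, h2, Real.sqrt_sq hZ0.le]
    rw [hx, hy, hz]
    linarith only [hone]
end

section
/- Let Q be a 3×3 symmetric positive definite matrix with entries q11, q22, q33 > 0 on the diagonal, off-diagonal entries q12 > 0, −q13 < 0, −q23 < 0 (i.e., sign pattern [[+,+,−],[+,+,−],[−,−,+]]) and satisfying q11 q23 > q12 q13, q22 q13 > q12 q23, q33 q12 > q13 q23. Define f(a,b,c) = q11 a + q22 b + q33 c − 2 q12 √(ab) − 2 q13 √(ac) + 2 q23 √(bc), and let s = q22 q13² + q33 q12² − 2 q12 q13 q23. Then for all a ≥ 0, b ≥ q13²/s, c ≥ q12²/s, we have f(a,b,c) > 1. -/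
/-!
Write `x = √a`, `y = √b`, `z = √c`. As a quadratic in `x`, `q₁₁ f` is the square
`(q₁₁ x - q₁₂ y - q₁₃ z)²` plus the binary form
`(q₁₁q₂₂ - q₁₂²) b + (q₁₁q₃₃ - q₁₃²) c + 2 (q₁₁q₂₃ - q₁₂q₁₃) √(bc)`.
Positive definiteness makes the first two coefficients and `s = Q(0, q₁₃, q₁₂)` positive, and
`q₁₁q₂₃ > q₁₂q₁₃` makes the third one positive, so the binary form is monotone in `b` and `c`.
At the corner `(q₁₃²/s, q₁₂²/s)` it equals `q₁₁ + 4 q₁₂q₁₃ (q₁₁q₂₃ - q₁₂q₁₃) / s > q₁₁`.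
-/

open Real

theorem quadForm_pos_of_posDef {q11 q22 q33 q12 q13 q23 : ℝ}
    (hQ : (!![q11, q12, -q13; q12, q22, -q23; -q13, -q23, q33]).PosDef)
    {x y z : ℝ} (hxyz : ¬(x = 0 ∧ y = 0 ∧ z = 0)) :
    0 < q11 * x ^ 2 + q22 * y ^ 2 + q33 * z ^ 2
      + 2 * q12 * x * y - 2 * q13 * x * z - 2 * q23 * y * z := by
  have hv : ![x, y, z] ≠ 0 := by
    simpa [funext_iff, Fin.forall_fin_succ] using hxyz
  have h := hQ.dotProduct_mulVec_pos hv
  simp [Matrix.mulVec, dotProduct, Fin.sum_univ_three] at h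
  linear_combination h

theorem mul_sqrtForm_eq (q11 q22 q33 q12 q13 q23 : ℝ) {a b c : ℝ}
    (ha : 0 ≤ a) (hb : 0 ≤ b) (hc : 0 ≤ c) :
    q11 * (q11 * a + q22 * b + q33 * c - 2 * q12 * √(a * b)
        - 2 * q13 * √(a * c) + 2 * q23 * √(b * c))
      = (q11 * √a - q12 * √b - q13 * √c) ^ 2
        + ((q11 * q22 - q12 ^ 2) * b + (q11 * q33 - q13 ^ 2) * c
          + 2 * (q11 * q23 - q12 * q13) * √(b * c)) := by
  rw [sqrt_mul ha, sqrt_mul ha, sqrt_mul hb]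
  linear_combination (-q11 ^ 2) * sq_sqrt ha - q12 ^ 2 * sq_sqrt hb - q13 ^ 2 * sq_sqrt hc

theorem add_sqrt_mul_le_of_le {A B C b₀ c₀ b c : ℝ} (hA : 0 ≤ A) (hB : 0 ≤ B) (hC : 0 ≤ C)
    (hb₀ : 0 ≤ b₀) (hc₀ : 0 ≤ c₀) (hb : b₀ ≤ b) (hc : c₀ ≤ c) :
    A * b₀ + B * c₀ + 2 * C * √(b₀ * c₀) ≤ A * b + B * c + 2 * C * √(b * c) := by
  have hsqrt : √(b₀ * c₀) ≤ √(b * c) :=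
    sqrt_le_sqrt (mul_le_mul hb hc hc₀ (hb₀.trans hb))
  gcongr

theorem lt_sqrtForm_at_corner {q11 q22 q33 q12 q13 q23 s : ℝ}
    (h12 : 0 < q12) (h13 : 0 < q13) (hd1 : q11 * q23 > q12 * q13)
    (hs : s = q22 * q13 ^ 2 + q33 * q12 ^ 2 - 2 * q12 * q13 * q23) (hs₀ : 0 < s) :
    q11 < (q11 * q22 - q12 ^ 2) * (q13 ^ 2 / s) + (q11 * q33 - q13 ^ 2) * (q12 ^ 2 / s)
      + 2 * (q11 * q23 - q12 * q13) * √(q13 ^ 2 / s * (q12 ^ 2 / s)) := by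
  have hsqrt : √(q13 ^ 2 / s * (q12 ^ 2 / s)) = q12 * q13 / s := by
    rw [show q13 ^ 2 / s * (q12 ^ 2 / s) = (q12 * q13 / s) ^ 2 by ring]
    exact sqrt_sq (by positivity)
  have hcorner : (q11 * q22 - q12 ^ 2) * (q13 ^ 2 / s) + (q11 * q33 - q13 ^ 2) * (q12 ^ 2 / s)
      + 2 * (q11 * q23 - q12 * q13) * (q12 * q13 / s)
      = q11 + 4 * (q12 * q13) * (q11 * q23 - q12 * q13) / s := by
    field_simp
    rw [hs]
    ring
  rw [hsqrt, hcorner, lt_add_iff_pos_right]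
  have hC : 0 < q11 * q23 - q12 * q13 := sub_pos.2 hd1
  positivity

theorem stmt_16_general (q11 q22 q33 q12 q13 q23 s : ℝ)
    (h11 : 0 < q11)
    (h12 : 0 < q12) (h13 : 0 < q13)
    (hQ : (!![q11, q12, -q13; q12, q22, -q23; -q13, -q23, q33]).PosDef)
    (hd1 : q11 * q23 > q12 * q13)
    (hs : s = q22 * q13 ^ 2 + q33 * q12 ^ 2 - 2 * q12 * q13 * q23)
    (a b c : ℝ) (ha : 0 ≤ a) (hb : q13 ^ 2 / s ≤ b) (hc : q12 ^ 2 / s ≤ c) :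
    1 < q11 * a + q22 * b + q33 * c - 2 * q12 * Real.sqrt (a * b)
        - 2 * q13 * Real.sqrt (a * c) + 2 * q23 * Real.sqrt (b * c) := by
  have hs₀ : 0 < s := by
    have h := quadForm_pos_of_posDef hQ (x := 0) (y := q13) (z := q12) (by simp [h13.ne'])
    linear_combination h - hs
  have hA : 0 ≤ q11 * q22 - q12 ^ 2 := by
    have h := quadForm_pos_of_posDef hQ (x := q12) (y := -q11) (z := 0) (by simp [h11.ne'])
    exact (pos_of_mul_pos_right (by linear_combination h) h11.le).le
  have hB : 0 ≤ q11 * q33 - q13 ^ 2 := by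
    have h := quadForm_pos_of_posDef hQ (x := q13) (y := 0) (z := q11) (by simp [h11.ne'])
    exact (pos_of_mul_pos_right (by linear_combination h) h11.le).le
  have hb₀ : 0 ≤ q13 ^ 2 / s := by positivity
  have hc₀ : 0 ≤ q12 ^ 2 / s := by positivity
  refine lt_of_mul_lt_mul_left ?_ h11.le
  calc q11 * 1 < _ := by simpa using lt_sqrtForm_at_corner h12 h13 hd1 hs hs₀
    _ ≤ _ := add_sqrt_mul_le_of_le hA hB (sub_pos.2 hd1).le hb₀ hc₀ hb hc
    _ ≤ _ := by
      rw [mul_sqrtForm_eq q11 q22 q33 q12 q13 q23 ha (hb₀.trans hb) (hc₀.trans hc)]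
      exact le_add_of_nonneg_left (sq_nonneg _)

/-- For a positive definite matrix with sign pattern `[[+,+,−],[+,+,−],[−,−,+]]`
satisfying `q₁₁ q₂₃ > q₁₂ q₁₃`, `q₂₂ q₁₃ > q₁₂ q₂₃`, `q₃₃ q₁₂ > q₁₃ q₂₃`, the form
`f(a,b,c) = q₁₁ a + q₂₂ b + q₃₃ c − 2 q₁₂ √(ab) − 2 q₁₃ √(ac) + 2 q₂₃ √(bc)`
exceeds `1` on the region `a ≥ 0`, `b ≥ q₁₃²/s`, `c ≥ q₁₂²/s`, where
`s = q₂₂ q₁₃² + q₃₃ q₁₂² − 2 q₁₂ q₁₃ q₂₃`. -/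
theorem stmt_16 (q11 q22 q33 q12 q13 q23 s : ℝ)
    (h11 : 0 < q11) (h22 : 0 < q22) (h33 : 0 < q33)
    (h12 : 0 < q12) (h13 : 0 < q13) (h23 : 0 < q23)
    (hQ : (!![q11, q12, -q13; q12, q22, -q23; -q13, -q23, q33]).PosDef)
    (hd1 : q11 * q23 > q12 * q13) (hd2 : q22 * q13 > q12 * q23)
    (hd3 : q33 * q12 > q13 * q23)
    (hs : s = q22 * q13 ^ 2 + q33 * q12 ^ 2 - 2 * q12 * q13 * q23)
    (a b c : ℝ) (ha : 0 ≤ a) (hb : q13 ^ 2 / s ≤ b) (hc : q12 ^ 2 / s ≤ c) :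
    1 < q11 * a + q22 * b + q33 * c - 2 * q12 * Real.sqrt (a * b)
        - 2 * q13 * Real.sqrt (a * c) + 2 * q23 * Real.sqrt (b * c) :=
  stmt_16_general q11 q22 q33 q12 q13 q23 s h11 h12 h13 hQ hd1 hs a b c ha hb hc
end
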